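/- Let f : ℝ → ℝ be the Rayleigh density f(x) = 8x·exp(−4x²) for x > 0 and f(x) = 0 for x ≤ 0. Then for every y > 0, M_f(y) = y·(32·exp(−15y²) + 4·exp(−3y²) − 1) / (32·exp(−15y²) + 16·exp(−3y²) + 2). Moreover there exists a unique k > 0 with 32·exp(−15k²) + 4·exp(−3k²) = 1, and M_f(y) > 0 for 0 < y < k while M_f(y) < 0 for y > k. -/
import Mathlib


/-- The halving-or-doubling expected-benefit formula. -/
noncomputable def Mf (f : ℝ → ℝ) (y : ℝ) : ℝ :=
  (-(y / 2) * f (y / 2) + y * f y + 4 * y * f (2 * y)) /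
    (f (y / 2) + 4 * f y + 4 * f (2 * y))

/-- The Rayleigh density (Weibull with scale `1/2` and shape `2`). -/
noncomputable def rayleighDensity : ℝ → ℝ := fun x =>
  if 0 < x then 8 * x * Real.exp (-(2 * x) ^ 2) else 0

private noncomputable def gfun (y : ℝ) : ℝ :=
  32 * Real.exp (-15 * y ^ 2) + 4 * Real.exp (-3 * y ^ 2)

private lemma gfun_anti {a b : ℝ} (ha : 0 ≤ a) (hab : a < b) : gfun b < gfun a := by
  have h2 : a ^ 2 < b ^ 2 := by nlinarith
  have h15 : Real.exp (-15 * b ^ 2) < Real.exp (-15 * a ^ 2) :=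
    Real.exp_lt_exp.2 (by nlinarith)
  have h3 : Real.exp (-3 * b ^ 2) < Real.exp (-3 * a ^ 2) :=
    Real.exp_lt_exp.2 (by nlinarith)
  unfold gfun; nlinarith

private lemma mf_formula (y : ℝ) (hy : 0 < y) :
    Mf rayleighDensity y =
      y * (32 * Real.exp (-15 * y ^ 2) + 4 * Real.exp (-3 * y ^ 2) - 1) /
        (32 * Real.exp (-15 * y ^ 2) + 16 * Real.exp (-3 * y ^ 2) + 2) := by
  have h1 : (0:ℝ) < y / 2 := by linarith
  have h2 : (0:ℝ) < 2 * y := by linarith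
  simp only [Mf, rayleighDensity, if_pos h1, if_pos hy, if_pos h2]
  set t : ℝ := Real.exp (-(y ^ 2)) with ht
  have htpos : 0 < t := Real.exp_pos _
  have e1 : Real.exp (-(2 * (y / 2)) ^ 2) = t := by rw [ht]; ring_nf
  have e4 : Real.exp (-(2 * y) ^ 2) = t ^ 4 := by
    rw [ht, ← Real.exp_nat_mul]; norm_num; ring_nf
  have e16 : Real.exp (-(2 * (2 * y)) ^ 2) = t ^ 16 := by
    rw [ht, ← Real.exp_nat_mul]; norm_num; ring_nf
  have e15 : Real.exp (-15 * y ^ 2) = t ^ 15 := by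
    rw [ht, ← Real.exp_nat_mul]; norm_num
  have e3 : Real.exp (-3 * y ^ 2) = t ^ 3 := by
    rw [ht, ← Real.exp_nat_mul]; norm_num
  rw [e1, e4, e16, e15, e3]
  rw [div_eq_div_iff]
  · ring
  · positivity
  · positivity

/-- For the Rayleigh density, the halving-or-doubling expected benefit is
`y (32 e^{-15y²} + 4 e^{-3y²} - 1) / (32 e^{-15y²} + 16 e^{-3y²} + 2)`; there is a
unique `k > 0` with `32 e^{-15k²} + 4 e^{-3k²} = 1`, and the expected benefit is
positive for `0 < y < k` and negative for `y > k`. -/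
theorem rayleigh_halving_or_doubling :
    (∀ y : ℝ, 0 < y →
        Mf rayleighDensity y =
          y * (32 * Real.exp (-15 * y ^ 2) + 4 * Real.exp (-3 * y ^ 2) - 1) /
            (32 * Real.exp (-15 * y ^ 2) + 16 * Real.exp (-3 * y ^ 2) + 2)) ∧
      ∃ k : ℝ, 0 < k ∧
        32 * Real.exp (-15 * k ^ 2) + 4 * Real.exp (-3 * k ^ 2) = 1 ∧
        (∀ k' : ℝ, 0 < k' →
          32 * Real.exp (-15 * k' ^ 2) + 4 * Real.exp (-3 * k' ^ 2) = 1 → k' = k) ∧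
        (∀ y : ℝ, 0 < y → y < k → 0 < Mf rayleighDensity y) ∧
        (∀ y : ℝ, k < y → Mf rayleighDensity y < 0) := by
  refine ⟨fun y hy => mf_formula y hy, ?_⟩
  -- continuity of gfun
  have hcont : Continuous gfun := by unfold gfun; continuity
  -- bounds
  have hexp3 : (20:ℝ) < Real.exp 3 := by
    have h := Real.exp_one_gt_d9
    have h3 : Real.exp 3 = Real.exp 1 * Real.exp 1 * Real.exp 1 := by
      rw [← Real.exp_add, ← Real.exp_add]; norm_num
    nlinarith [Real.exp_pos 1]
  have hg0 : gfun 0 = 36 := by norm_num [gfun]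
  have hg1 : gfun 1 < 1 := by
    have hm3 : Real.exp (-(3:ℝ)) < 1 / 20 := by
      rw [Real.exp_neg, inv_lt_comm₀ (Real.exp_pos 3) (by norm_num)]
      linarith
    have hm15 : Real.exp (-(15:ℝ)) < 1 / 400 := by
      have h66 : Real.exp (6:ℝ) = Real.exp 3 * Real.exp 3 := by
        rw [← Real.exp_add]; norm_num
      have h6 : (400:ℝ) < Real.exp 6 := by nlinarith [Real.exp_pos 3]
      have hle : Real.exp (-(15:ℝ)) ≤ Real.exp (-(6:ℝ)) := Real.exp_le_exp.2 (by norm_num)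
      have h2 : Real.exp (-(6:ℝ)) < 1 / 400 := by
        rw [Real.exp_neg, inv_lt_comm₀ (Real.exp_pos 6) (by norm_num)]
        linarith
      linarith
    have hge : gfun 1 = 32 * Real.exp (-(15:ℝ)) + 4 * Real.exp (-(3:ℝ)) := by
      unfold gfun; norm_num
    rw [hge]; linarith
  obtain ⟨k, hkmem, hgk⟩ : ∃ k ∈ Set.Icc (0:ℝ) 1, gfun k = 1 := by
    have := intermediate_value_Icc' (by norm_num : (0:ℝ) ≤ 1) hcont.continuousOn
    have h1mem : (1:ℝ) ∈ Set.Icc (gfun 1) (gfun 0) := by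
      constructor <;> [linarith; linarith [hg0]]
    obtain ⟨k, hk, hk'⟩ := this h1mem
    exact ⟨k, hk, hk'⟩
  have hkpos : 0 < k := by
    rcases lt_or_eq_of_le hkmem.1 with h | h
    · exact h
    · exfalso; rw [← h] at hgk; rw [hg0] at hgk; norm_num at hgk
  have huniq : ∀ k' : ℝ, 0 < k' → gfun k' = 1 → k' = k := by
    intro k' hk' hgk'
    rcases lt_trichotomy k' k with h | h | h
    · have := gfun_anti (le_of_lt hk') h; rw [hgk, hgk'] at this; linarith
    · exact h
    · have := gfun_anti (le_of_lt hkpos) h; rw [hgk, hgk'] at this; linarith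
  have hden : ∀ y : ℝ, (0:ℝ) < 32 * Real.exp (-15 * y ^ 2) + 16 * Real.exp (-3 * y ^ 2) + 2 := by
    intro y; positivity
  refine ⟨k, hkpos, hgk, huniq, ?_, ?_⟩
  · intro y hy hyk
    rw [mf_formula y hy]
    apply div_pos _ (hden y)
    have : 1 < gfun y := by have := gfun_anti (le_of_lt hy) hyk; rw [hgk] at this; linarith
    unfold gfun at this; nlinarith
  · intro y hky
    have hy : 0 < y := lt_trans hkpos hky
    rw [mf_formula y hy]
    apply div_neg_of_neg_of_pos _ (hden y)
    have : gfun y < 1 := by have := gfun_anti (le_of_lt hkpos) hky; rw [hgk] at this; linarith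
    unfold gfun at this; nlinarith
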